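/- arXiv:1912.04537 — 3 statements merged into one kernel-verified Lean document; each statement's English description precedes it below -/
import Mathlib

section
/- For every real a > 1, every integer m ≥ 1 and every x ≥ 0, the first central moment satisfies Λ¹_m(x) = 1/(2m) − x + x·(log a)/(m·(a^{1/m} − 1)). -/
open Real MeasureTheory Filter

/-- The modified Szász–Mirakjan–Kantorovich operator of Mishra and Yadav. -/
noncomputable def szaszKant (a : ℝ) (m : ℕ) (f : ℝ → ℝ) (x : ℝ) : ℝ :=
  (m : ℝ) * ∑' k : ℕ,
    Real.exp (-(x * Real.log a / (a ^ ((1 : ℝ) / (m : ℝ)) - 1))) *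
      (x * Real.log a / (a ^ ((1 : ℝ) / (m : ℝ)) - 1)) ^ k / (Nat.factorial k : ℝ) *
      ∫ t in ((k : ℝ) / (m : ℝ))..(((k : ℝ) + 1) / (m : ℝ)), f t

/-- The `n`-th central moment of the operator. -/
noncomputable def szaszKantCM (a : ℝ) (m : ℕ) (n : ℕ) (x : ℝ) : ℝ :=
  szaszKant a m (fun t => (t - x) ^ n) x

lemma tsum_pow_div_factorial (y : ℝ) : ∑' k : ℕ, y ^ k / (Nat.factorial k : ℝ) = Real.exp y := by
  rw [Real.exp_eq_exp_ℝ, NormedSpace.exp_eq_tsum_div]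

lemma summable_mul_pow_div_factorial (y : ℝ) :
    Summable (fun k : ℕ => (k : ℝ) * y ^ k / (Nat.factorial k : ℝ)) := by
  rw [← summable_nat_add_iff 1]
  have h : (fun k : ℕ => ((k + 1 : ℕ) : ℝ) * y ^ (k + 1) / (Nat.factorial (k + 1) : ℝ)) =
      fun k : ℕ => y * (y ^ k / (Nat.factorial k : ℝ)) := by
    funext k
    rw [Nat.factorial_succ, pow_succ]
    push_cast
    field_simp
  rw [h]
  exact (Real.summable_pow_div_factorial y).mul_left y

lemma tsum_mul_pow_div_factorial (y : ℝ) :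
    ∑' k : ℕ, (k : ℝ) * y ^ k / (Nat.factorial k : ℝ) = y * Real.exp y := by
  rw [Summable.tsum_eq_zero_add (summable_mul_pow_div_factorial y)]
  have h : (fun k : ℕ => ((k + 1 : ℕ) : ℝ) * y ^ (k + 1) / (Nat.factorial (k + 1) : ℝ)) =
      fun k : ℕ => y * (y ^ k / (Nat.factorial k : ℝ)) := by
    funext k
    rw [Nat.factorial_succ, pow_succ]
    push_cast
    field_simp
  simp only [h, Nat.cast_zero, zero_mul, zero_div, zero_add]
  rw [tsum_mul_left, tsum_pow_div_factorial]

theorem szaszKantCM_one (a : ℝ) (ha : 1 < a) (m : ℕ) (hm : 1 ≤ m)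
    (x : ℝ) (hx : 0 ≤ x) :
    szaszKantCM a m 1 x =
      1 / (2 * (m : ℝ)) - x + x * Real.log a / ((m : ℝ) * (a ^ ((1 : ℝ) / (m : ℝ)) - 1)) := by
  have hm0 : (0 : ℝ) < (m : ℝ) := by exact_mod_cast hm
  set y : ℝ := x * Real.log a / (a ^ ((1 : ℝ) / (m : ℝ)) - 1) with hy
  -- the integral
  have hI : ∀ k : ℕ, (∫ t in ((k : ℝ) / (m : ℝ))..(((k : ℝ) + 1) / (m : ℝ)), (t - x) ^ 1)
      = (2 * (k : ℝ) + 1) / (2 * (m : ℝ) ^ 2) - x / (m : ℝ) := by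
    intro k
    simp only [pow_one]
    rw [intervalIntegral.integral_sub intervalIntegral.intervalIntegrable_id
      (intervalIntegrable_const (c := x)), integral_id, intervalIntegral.integral_const,
      smul_eq_mul]
    field_simp
    ring
  unfold szaszKantCM szaszKant
  simp only [hI, ← hy]
  have hterm : ∀ k : ℕ, Real.exp (-y) * y ^ k / (Nat.factorial k : ℝ) *
      ((2 * (k : ℝ) + 1) / (2 * (m : ℝ) ^ 2) - x / (m : ℝ))
      = (Real.exp (-y) / (m : ℝ) ^ 2) * ((k : ℝ) * y ^ k / (Nat.factorial k : ℝ))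
        + (Real.exp (-y) * (1 / (2 * (m : ℝ) ^ 2) - x / (m : ℝ))) *
          (y ^ k / (Nat.factorial k : ℝ)) := by
    intro k
    field_simp
    ring
  rw [tsum_congr hterm, Summable.tsum_add
    (((summable_mul_pow_div_factorial y)).mul_left _)
    ((Real.summable_pow_div_factorial y).mul_left _),
    tsum_mul_left, tsum_mul_left, tsum_mul_pow_div_factorial, tsum_pow_div_factorial,
    Real.exp_neg]
  have ha1 : a ^ ((1 : ℝ) / (m : ℝ)) - 1 ≠ 0 := by
    have : 1 < a ^ ((1 : ℝ) / (m : ℝ)) :=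
      Real.one_lt_rpow_iff_of_pos (by linarith) |>.mpr (Or.inl ⟨ha, by positivity⟩)
    linarith
  rw [hy]
  have he := Real.exp_ne_zero y
  field_simp
  ring
end

section
/- For every real a > 1, every integer m ≥ 1 and every x ≥ 0, the third central moment satisfies Λ³_m(x) = −(−1 + 4mx − 6m²x² + 4m³x³)/(4m³) + x·(7 − 12mx + 6m²x²)·(log a)/(2·(a^{1/m} − 1)·m³) − 3x²·(−3 + 2mx)·(log a)²/(2·(a^{1/m} − 1)²·m³) + x³·(log a)³/((a^{1/m} − 1)³·m³). -/
open Real MeasureTheory Filter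

/-!
On `[k/m, (k+1)/m]` the integral of `(s - x)^3` is a cubic polynomial in `k` (divided by `m^4`),
so `Λ³_m(x)` is the expectation of a cubic in a Poisson variable of parameter
`t = x log a / (a^{1/m} - 1)`. Writing `k^2` and `k^3` through falling factorials and using
`∑ k^{(j)} t^k / k! = t^j e^t` evaluates it as a cubic in `t`; the stated formula is that
cubic with `t` substituted.
-/

open Nat

theorem hasSum_descFactorial_mul_pow_div_factorial (t : ℝ) (j : ℕ) :
    HasSum (fun k : ℕ => (k.descFactorial j : ℝ) * t ^ k / k !) (t ^ j * exp t) := by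
  rw [← hasSum_nat_add_iff' j]
  have hlow : ∑ i ∈ Finset.range j, (i.descFactorial j : ℝ) * t ^ i / i ! = 0 :=
    Finset.sum_eq_zero fun i hi => by
      simp [Nat.descFactorial_eq_zero_iff_lt.2 (Finset.mem_range.1 hi)]
  have hshift (k : ℕ) : ((k + j).descFactorial j : ℝ) * t ^ (k + j) / (k + j)! =
      t ^ j * (t ^ k / k !) := by
    rw [Nat.add_descFactorial_eq_ascFactorial, ← Nat.factorial_mul_ascFactorial]
    have : ((k + 1).ascFactorial j : ℝ) ≠ 0 := by positivity
    push_cast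
    field_simp
    ring
  simp only [hlow, sub_zero, hshift]
  rw [exp_eq_exp_ℝ]
  exact (NormedSpace.expSeries_div_hasSum_exp t).mul_left _

theorem hasSum_exp_neg_mul_pow_div_factorial_mul_cubic (t c₀ c₁ c₂ c₃ : ℝ) :
    HasSum (fun k : ℕ => exp (-t) * t ^ k / k ! * (c₀ + c₁ * k + c₂ * k ^ 2 + c₃ * k ^ 3))
      (c₀ + (c₁ + c₂ + c₃) * t + (c₂ + 3 * c₃) * t ^ 2 + c₃ * t ^ 3) := by
  have hmom := hasSum_descFactorial_mul_pow_div_factorial t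
  -- `k^2 = k^{(2)} + k^{(1)}` and `k^3 = k^{(3)} + 3 k^{(2)} + k^{(1)}` in falling factorials
  convert! ((((hmom 0).mul_left c₀).add ((hmom 1).mul_left (c₁ + c₂ + c₃))).add
    (((hmom 2).mul_left (c₂ + 3 * c₃)).add ((hmom 3).mul_left c₃))).mul_left (exp (-t)) using 1
  · funext k
    simp only [← descPochhammer_eval_eq_descFactorial ℝ, descPochhammer_succ_eval,
      descPochhammer_zero, Polynomial.eval_one]
    ring
  · rw [exp_neg]
    field_simp
    ring

/-- The right side is `((k + 1 - m x)^4 - (k - m x)^4) / (4 m^4)` expanded in powers of `k`. -/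
theorem integral_div_sub_pow_three (m x k : ℝ) (hm : m ≠ 0) :
    ∫ s in k / m..(k + 1) / m, (s - x) ^ 3 =
      ((1 - 4 * (m * x) + 6 * (m * x) ^ 2 - 4 * (m * x) ^ 3) / 4 +
        (1 - 3 * (m * x) + 3 * (m * x) ^ 2) * k + (3 / 2 - 3 * (m * x)) * k ^ 2 + k ^ 3) / m ^ 4 := by
  rw [intervalIntegral.integral_comp_sub_right (· ^ 3) x, integral_pow, div_sub' hm, div_sub' hm,
    div_pow, div_pow]
  field_simp
  ring

theorem szaszKantCM_three_general (a : ℝ) (m : ℕ) (x : ℝ) :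
    szaszKantCM a m 3 x =
      -((-1 + 4 * (m : ℝ) * x - 6 * (m : ℝ) ^ 2 * x ^ 2 + 4 * (m : ℝ) ^ 3 * x ^ 3) /
          (4 * (m : ℝ) ^ 3)) +
        x * (7 - 12 * (m : ℝ) * x + 6 * (m : ℝ) ^ 2 * x ^ 2) * Real.log a /
          (2 * (a ^ ((1 : ℝ) / (m : ℝ)) - 1) * (m : ℝ) ^ 3) -
        3 * x ^ 2 * (-3 + 2 * (m : ℝ) * x) * Real.log a ^ 2 /
          (2 * (a ^ ((1 : ℝ) / (m : ℝ)) - 1) ^ 2 * (m : ℝ) ^ 3) +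
        x ^ 3 * Real.log a ^ 3 / ((a ^ ((1 : ℝ) / (m : ℝ)) - 1) ^ 3 * (m : ℝ) ^ 3) := by
  rcases eq_or_ne m 0 with rfl | hm
  · -- both sides vanish: the operator carries the factor `m`, and `_ / 0 = 0` on the right
    simp [szaszKantCM, szaszKant]
  have hm' : (m : ℝ) ≠ 0 := Nat.cast_ne_zero.2 hm
  simp only [szaszKantCM, szaszKant, integral_div_sub_pow_three _ _ _ hm', ← mul_div_assoc]
  set t := x * log a / (a ^ ((1 : ℝ) / m) - 1) with ht
  have h := (hasSum_exp_neg_mul_pow_div_factorial_mul_cubic t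
    ((1 - 4 * (m * x) + 6 * (m * x) ^ 2 - 4 * (m * x) ^ 3) / 4) (1 - 3 * (m * x) + 3 * (m * x) ^ 2)
    (3 / 2 - 3 * (m * x)) 1).div_const ((m : ℝ) ^ 4)
  simp only [one_mul] at h
  rw [h.tsum_eq, ht]
  field_simp
  ring

theorem szaszKantCM_three (a : ℝ) (ha : 1 < a) (m : ℕ) (hm : 1 ≤ m)
    (x : ℝ) (hx : 0 ≤ x) :
    szaszKantCM a m 3 x =
      -((-1 + 4 * (m : ℝ) * x - 6 * (m : ℝ) ^ 2 * x ^ 2 + 4 * (m : ℝ) ^ 3 * x ^ 3) /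
          (4 * (m : ℝ) ^ 3)) +
        x * (7 - 12 * (m : ℝ) * x + 6 * (m : ℝ) ^ 2 * x ^ 2) * Real.log a /
          (2 * (a ^ ((1 : ℝ) / (m : ℝ)) - 1) * (m : ℝ) ^ 3) -
        3 * x ^ 2 * (-3 + 2 * (m : ℝ) * x) * Real.log a ^ 2 /
          (2 * (a ^ ((1 : ℝ) / (m : ℝ)) - 1) ^ 2 * (m : ℝ) ^ 3) +
        x ^ 3 * Real.log a ^ 3 / ((a ^ ((1 : ℝ) / (m : ℝ)) - 1) ^ 3 * (m : ℝ) ^ 3) :=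
  szaszKantCM_three_general a m x
end

section
/- Let a > 1 and let g : [0,∞) → ℝ be continuous and bounded. Then R̂_{m,a}(g; x) converges to g(x) as m → ∞ uniformly on every compact subset of [0,∞); that is, for every b > 0, lim_{m→∞} sup_{x ∈ [0,b]} |R̂_{m,a}(g; x) − g(x)| = 0. -/
set_option maxHeartbeats 2000000

open Real MeasureTheory Filter

noncomputable def szRat (a : ℝ) (m : ℕ) : ℝ :=
  Real.log a / (a ^ ((1 : ℝ) / (m : ℝ)) - 1) / (m : ℝ)


lemma szRat_tendsto (a : ℝ) (ha : 1 < a) : Tendsto (fun m : ℕ => szRat a m) atTop (nhds 1) := by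
  have ha0 : (0:ℝ) < a := lt_trans one_pos ha
  have hlog : 0 < Real.log a := Real.log_pos ha
  have hd : HasDerivAt (fun h : ℝ => a ^ h) (Real.log a) 0 := by
    have := (Real.hasStrictDerivAt_const_rpow ha0 0).hasDerivAt
    simpa using this
  have hslope := hasDerivAt_iff_tendsto_slope.mp hd
  have h1 : Tendsto (fun m : ℕ => 1 / (m : ℝ)) atTop (nhdsWithin 0 {(0:ℝ)}ᶜ) := by
    apply tendsto_nhdsWithin_of_tendsto_nhds_of_eventually_within _ tendsto_one_div_atTop_nhds_zero_nat
    filter_upwards [eventually_ge_atTop 1] with m hm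
    have : (0:ℝ) < m := by exact_mod_cast Nat.lt_of_lt_of_le Nat.zero_lt_one hm
    simp only [Set.mem_compl_iff, Set.mem_singleton_iff]
    positivity
  have h2 : Tendsto (fun m : ℕ => (a ^ ((1:ℝ)/(m:ℝ)) - 1) * m) atTop (nhds (Real.log a)) := by
    have h3 := hslope.comp h1
    refine h3.congr' ?_
    filter_upwards [eventually_ge_atTop 1] with m hm
    have hm0 : (0:ℝ) < m := by exact_mod_cast Nat.lt_of_lt_of_le Nat.zero_lt_one hm
    have hmne : (m:ℝ) ≠ 0 := ne_of_gt hm0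
    simp only [Function.comp_apply, slope_def_field]
    rw [Real.rpow_zero]
    field_simp
    ring
  have h4 : Tendsto (fun m : ℕ => Real.log a / ((a ^ ((1:ℝ)/(m:ℝ)) - 1) * m)) atTop
      (nhds (Real.log a / Real.log a)) := tendsto_const_nhds.div h2 (ne_of_gt hlog)
  rw [div_self (ne_of_gt hlog)] at h4
  refine h4.congr fun m => ?_
  rw [szRat, div_div]

lemma szRat_pos (a : ℝ) (ha : 1 < a) (m : ℕ) (hm : 1 ≤ m) : 0 < szRat a m := by
  have ha0 : (0:ℝ) < a := lt_trans one_pos ha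
  have hm0 : (0:ℝ) < m := by exact_mod_cast Nat.lt_of_lt_of_le Nat.zero_lt_one hm
  have h1 : 1 < a ^ ((1:ℝ)/(m:ℝ)) := by
    rw [Real.one_lt_rpow_iff_of_pos ha0]
    exact Or.inl ⟨ha, by positivity⟩
  exact div_pos (div_pos (Real.log_pos ha) (by linarith)) hm0

lemma szE_tendsto (a : ℝ) (ha : 1 < a) (b : ℝ) :
    Tendsto (fun m : ℕ => b^2*(szRat a m - 1)^2 + 2*b*szRat a m/(m:ℝ) + 1/(3*(m:ℝ)^2))
      atTop (nhds 0) := by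
  have hr := szRat_tendsto a ha
  have h1m : Tendsto (fun m : ℕ => 1/(m:ℝ)) atTop (nhds 0) := tendsto_one_div_atTop_nhds_zero_nat
  have h := ((((hr.sub_const 1).pow 2).const_mul (b^2)).add
      (((hr.mul h1m).const_mul (2*b)))).add ((h1m.mul h1m).div_const 3)
  have hval : b^2*((1:ℝ)-1)^2 + 2*b*(1*0) + 0*0/3 = 0 := by ring
  rw [hval] at h
  refine h.congr fun m => ?_
  ring


lemma tsum_exp_series (l : ℝ) : ∑' k : ℕ, l ^ k / (Nat.factorial k : ℝ) = Real.exp l := by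
  rw [Real.exp_eq_exp_ℝ, NormedSpace.exp_eq_tsum_div]

lemma summable0 (l : ℝ) : Summable (fun k : ℕ => l ^ k / (Nat.factorial k : ℝ)) :=
  Real.summable_pow_div_factorial l

lemma succ_term (l : ℝ) (k : ℕ) :
    ((k : ℝ) + 1) * (l ^ (k + 1) / (Nat.factorial (k + 1) : ℝ))
      = l * (l ^ k / (Nat.factorial k : ℝ)) := by
  have hk : (Nat.factorial (k + 1) : ℝ) = ((k : ℝ) + 1) * (Nat.factorial k : ℝ) := by
    rw [Nat.factorial_succ]; push_cast; ring
  have h1 : ((k : ℝ) + 1) ≠ 0 := by positivity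
  have h2 : (Nat.factorial k : ℝ) ≠ 0 := Nat.cast_ne_zero.2 (Nat.factorial_ne_zero k)
  rw [hk]; field_simp; ring

lemma summable1 (l : ℝ) : Summable (fun k : ℕ => (k : ℝ) * (l ^ k / (Nat.factorial k : ℝ))) := by
  rw [← summable_nat_add_iff 1]
  have : (fun k : ℕ => ((k + 1 : ℕ) : ℝ) * (l ^ (k + 1) / (Nat.factorial (k + 1) : ℝ)))
      = fun k : ℕ => l * (l ^ k / (Nat.factorial k : ℝ)) := by
    funext k; push_cast; exact succ_term l k
  rw [this]
  exact (summable0 l).mul_left l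

lemma tsum1 (l : ℝ) : ∑' k : ℕ, (k : ℝ) * (l ^ k / (Nat.factorial k : ℝ)) = l * Real.exp l := by
  rw [Summable.tsum_eq_zero_add (summable1 l)]
  push_cast
  have h : ∑' k : ℕ, ((k : ℝ) + 1) * (l ^ (k + 1) / (Nat.factorial (k + 1) : ℝ))
      = ∑' k : ℕ, l * (l ^ k / (Nat.factorial k : ℝ)) := by
    refine tsum_congr fun k => ?_
    exact succ_term l k
  rw [h, tsum_mul_left, tsum_exp_series]
  simp

lemma summable2 (l : ℝ) : Summable (fun k : ℕ => (k : ℝ)^2 * (l ^ k / (Nat.factorial k : ℝ))) := by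
  rw [← summable_nat_add_iff 1]
  have : (fun k : ℕ => ((k + 1 : ℕ) : ℝ)^2 * (l ^ (k + 1) / (Nat.factorial (k + 1) : ℝ)))
      = fun k : ℕ => l * ((k : ℝ) * (l ^ k / (Nat.factorial k : ℝ)))
          + l * (l ^ k / (Nat.factorial k : ℝ)) := by
    funext k; push_cast
    have := succ_term l k
    nlinarith [this]
  rw [this]
  exact ((summable1 l).mul_left l).add ((summable0 l).mul_left l)

lemma tsum2 (l : ℝ) : ∑' k : ℕ, (k : ℝ)^2 * (l ^ k / (Nat.factorial k : ℝ))
    = (l^2 + l) * Real.exp l := by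
  rw [Summable.tsum_eq_zero_add (summable2 l)]
  push_cast
  have h : ∑' k : ℕ, ((k : ℝ) + 1)^2 * (l ^ (k + 1) / (Nat.factorial (k + 1) : ℝ))
      = ∑' k : ℕ, (l * ((k : ℝ) * (l ^ k / (Nat.factorial k : ℝ)))
          + l * (l ^ k / (Nat.factorial k : ℝ))) := by
    refine tsum_congr fun k => ?_
    have := succ_term l k
    nlinarith [this]
  rw [h, Summable.tsum_add ((summable1 l).mul_left l) ((summable0 l).mul_left l),
    tsum_mul_left, tsum_mul_left, tsum1, tsum_exp_series]
  ring

lemma szaszKant_key (a : ℝ) (ha : 1 < a) (g : ℝ → ℝ)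
    (hgc : ContinuousOn g (Set.Ici 0)) (B : ℝ) (hB : 0 ≤ B)
    (hgb : ∀ t : ℝ, 0 ≤ t → |g t| ≤ B)
    (b : ℝ) (hb : 0 < b) (ε δ : ℝ) (hε : 0 < ε) (hδ : 0 < δ) (hδ1 : δ ≤ 1)
    (huc : ∀ s ∈ Set.Icc (0:ℝ) (b+1), ∀ t ∈ Set.Icc (0:ℝ) (b+1), |s - t| ≤ δ → |g s - g t| ≤ ε)
    (m : ℕ) (hm : 1 ≤ m) (x : ℝ) (hx : x ∈ Set.Icc (0:ℝ) b) :
    |szaszKant a m g x - g x| ≤ ε + (2*B/δ^2) *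
      (b^2*(szRat a m - 1)^2 + 2*b*szRat a m/(m:ℝ) + 1/(3*(m:ℝ)^2)) := by
  have hm0 : (0:ℝ) < m := by exact_mod_cast Nat.lt_of_lt_of_le Nat.zero_lt_one hm
  have hmne : (m:ℝ) ≠ 0 := ne_of_gt hm0
  have ha0 : (0:ℝ) < a := lt_trans one_pos ha
  have hd1 : 1 < a ^ ((1:ℝ)/(m:ℝ)) := by
    rw [Real.one_lt_rpow_iff_of_pos ha0]
    exact Or.inl ⟨ha, by positivity⟩
  set c : ℝ := Real.log a / (a ^ ((1:ℝ)/(m:ℝ)) - 1) with hc_def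
  have hc : 0 < c := div_pos (Real.log_pos ha) (by linarith)
  have hx0 : 0 ≤ x := hx.1
  have hxb : x ≤ b := hx.2
  set l : ℝ := x * c with hl_def
  have hl : 0 ≤ l := mul_nonneg hx0 hc.le
  set C : ℝ := 2*B/δ^2 with hC_def
  have hC : 0 ≤ C := by positivity
  have hparam : x * Real.log a / (a ^ ((1:ℝ)/(m:ℝ)) - 1) = l := by
    rw [hl_def, hc_def, mul_div_assoc]
  set p : ℕ → ℝ := fun k => Real.exp (-l) * l ^ k / (Nat.factorial k : ℝ) with hp_def
  have hp0 : ∀ k, 0 ≤ p k := fun k =>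
    div_nonneg (mul_nonneg (Real.exp_pos _).le (pow_nonneg hl _)) (Nat.cast_nonneg _)
  have hpfun : p = fun k => Real.exp (-l) * (l ^ k / (Nat.factorial k : ℝ)) := by
    funext k; exact mul_div_assoc _ _ _
  have hpsum : Summable p := by
    rw [hpfun]; exact (summable0 l).mul_left _
  have hpsum1 : ∑' k, p k = 1 := by
    rw [hpfun, tsum_mul_left, tsum_exp_series, ← Real.exp_add]; simp
  have hle : ∀ k : ℕ, (k:ℝ)/(m:ℝ) ≤ ((k:ℝ)+1)/(m:ℝ) := fun k => by
    gcongr <;> linarith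
  have hlen : ∀ k : ℕ, ((k:ℝ)+1)/(m:ℝ) - (k:ℝ)/(m:ℝ) = 1/(m:ℝ) := fun k => by
    field_simp
    ring
  have hsub : ∀ k : ℕ, Set.uIcc ((k:ℝ)/(m:ℝ)) (((k:ℝ)+1)/(m:ℝ)) ⊆ Set.Ici 0 := fun k => by
    rw [Set.uIcc_of_le (hle k)]
    intro t ht
    exact le_trans (by positivity) ht.1
  have hgi : ∀ k : ℕ, IntervalIntegrable g volume ((k:ℝ)/(m:ℝ)) (((k:ℝ)+1)/(m:ℝ)) := fun k =>
    (hgc.mono (hsub k)).intervalIntegrable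
  -- bound on each integral of g
  have hIb : ∀ k : ℕ, |∫ t in ((k:ℝ)/(m:ℝ))..(((k:ℝ)+1)/(m:ℝ)), g t| ≤ B * (1/(m:ℝ)) := by
    intro k
    have h := intervalIntegral.norm_integral_le_of_norm_le_const
      (a := (k:ℝ)/(m:ℝ)) (b := ((k:ℝ)+1)/(m:ℝ)) (C := B) (f := g) ?_
    · rw [Real.norm_eq_abs] at h
      rw [hlen k, abs_of_nonneg (by positivity : (0:ℝ) ≤ 1/(m:ℝ))] at h
      exact h
    · intro t ht
      rw [Set.uIoc_of_le (hle k)] at ht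
      rw [Real.norm_eq_abs]
      exact hgb t (le_trans (by positivity) ht.1.le)
  have hS1 : Summable (fun k : ℕ => p k * ∫ t in ((k:ℝ)/(m:ℝ))..(((k:ℝ)+1)/(m:ℝ)), g t) := by
    apply Summable.of_norm_bounded (g := fun k => p k * (B * (1/(m:ℝ)))) (hpsum.mul_right _)
    intro k
    rw [Real.norm_eq_abs, abs_mul, abs_of_nonneg (hp0 k)]
    exact mul_le_mul_of_nonneg_left (hIb k) (hp0 k)
  -- Step A : rewrite the difference
  have hA : szaszKant a m g x - g x
      = (m:ℝ) * ∑' k : ℕ, p k * ∫ t in ((k:ℝ)/(m:ℝ))..(((k:ℝ)+1)/(m:ℝ)), (g t - g x) := by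
    have h1 : szaszKant a m g x
        = (m:ℝ) * ∑' k : ℕ, p k * ∫ t in ((k:ℝ)/(m:ℝ))..(((k:ℝ)+1)/(m:ℝ)), g t := by
      rw [szaszKant]
      congr 1
      refine tsum_congr fun k => ?_
      rw [hparam, hp_def]
    have h2 : ∀ k : ℕ, (∫ t in ((k:ℝ)/(m:ℝ))..(((k:ℝ)+1)/(m:ℝ)), (g t - g x))
        = (∫ t in ((k:ℝ)/(m:ℝ))..(((k:ℝ)+1)/(m:ℝ)), g t) - (1/(m:ℝ)) * g x := by
      intro k
      rw [intervalIntegral.integral_sub (hgi k) intervalIntegrable_const,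
        intervalIntegral.integral_const, hlen k, smul_eq_mul]
    have hsplit : ∑' k : ℕ, (p k * ∫ t in ((k:ℝ)/(m:ℝ))..(((k:ℝ)+1)/(m:ℝ)), (g t - g x))
        = (∑' k : ℕ, p k * ∫ t in ((k:ℝ)/(m:ℝ))..(((k:ℝ)+1)/(m:ℝ)), g t) - (1/(m:ℝ)) * g x := by
      have heq : ∀ k : ℕ, p k * (∫ t in ((k:ℝ)/(m:ℝ))..(((k:ℝ)+1)/(m:ℝ)), (g t - g x))
          = p k * (∫ t in ((k:ℝ)/(m:ℝ))..(((k:ℝ)+1)/(m:ℝ)), g t) - p k * ((1/(m:ℝ)) * g x) := by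
        intro k; rw [h2 k]; ring
      rw [tsum_congr heq, Summable.tsum_sub hS1 (hpsum.mul_right _), tsum_mul_right, hpsum1, one_mul]
    rw [h1, hsplit, mul_sub]
    field_simp
  -- pointwise estimate
  have hpt : ∀ t : ℝ, 0 ≤ t → |g t - g x| ≤ ε + C * (t - x)^2 := by
    intro t ht
    by_cases hcase : |t - x| ≤ δ
    · have habs := abs_le.1 hcase
      have htb : t ∈ Set.Icc (0:ℝ) (b+1) := ⟨ht, by linarith [habs.2]⟩
      have hxb1 : x ∈ Set.Icc (0:ℝ) (b+1) := ⟨hx0, by linarith⟩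
      have h := huc t htb x hxb1 hcase
      nlinarith [sq_nonneg (t - x)]
    · push_neg at hcase
      have h2B : |g t - g x| ≤ 2*B := by
        have h1 := hgb t ht
        have h2 := hgb x hx0
        calc |g t - g x| ≤ |g t| + |g x| := abs_sub _ _
          _ ≤ 2*B := by linarith
      have hδ2 : δ^2 ≤ (t - x)^2 := by
        nlinarith [abs_nonneg (t - x), sq_abs (t - x)]
      have h2C : 2*B ≤ C * (t - x)^2 := by
        rw [hC_def, div_mul_eq_mul_div, le_div_iff₀ (by positivity)]
        nlinarith
      linarith
  -- compute the comparison integral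
  have hcont : Continuous (fun t : ℝ => ε + C*(t-x)^2) := by fun_prop
  have hcont2 : ∀ k : ℕ, IntervalIntegrable (fun t : ℝ => ε + C*(t-x)^2) volume
      ((k:ℝ)/(m:ℝ)) (((k:ℝ)+1)/(m:ℝ)) := fun k => hcont.intervalIntegrable _ _
  have hQint : ∀ k : ℕ, (∫ t in ((k:ℝ)/(m:ℝ))..(((k:ℝ)+1)/(m:ℝ)), (ε + C*(t-x)^2))
      = ε * (1/(m:ℝ)) + C * (((((k:ℝ)+1)/(m:ℝ) - x)^3 - ((k:ℝ)/(m:ℝ) - x)^3)/3) := by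
    intro k
    have hcont3 : Continuous (fun t : ℝ => C*(t-x)^2) := by fun_prop
    rw [intervalIntegral.integral_add intervalIntegrable_const
      (hcont3.intervalIntegrable _ _),
      intervalIntegral.integral_const, hlen k, smul_eq_mul,
      intervalIntegral.integral_const_mul]
    have hcomp : (∫ t in ((k:ℝ)/(m:ℝ))..(((k:ℝ)+1)/(m:ℝ)), (t - x)^2)
        = ∫ t in ((k:ℝ)/(m:ℝ) - x)..(((k:ℝ)+1)/(m:ℝ) - x), t^2 := by
      exact intervalIntegral.integral_comp_sub_right (fun s => s^2) x
    rw [hcomp, integral_pow]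
    norm_num
    ring
  -- integral comparison
  have hintbd : ∀ k : ℕ, |∫ t in ((k:ℝ)/(m:ℝ))..(((k:ℝ)+1)/(m:ℝ)), (g t - g x)|
      ≤ ∫ t in ((k:ℝ)/(m:ℝ))..(((k:ℝ)+1)/(m:ℝ)), (ε + C*(t-x)^2) := by
    intro k
    have hnn : 0 ≤ ∫ t in ((k:ℝ)/(m:ℝ))..(((k:ℝ)+1)/(m:ℝ)), (ε + C*(t-x)^2) := by
      apply intervalIntegral.integral_nonneg (hle k)
      intro t _
      positivity
    have h := intervalIntegral.norm_integral_le_abs_of_norm_le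
      (f := fun t => g t - g x) (g := fun t => ε + C*(t-x)^2)
      (μ := volume) (a := (k:ℝ)/(m:ℝ)) (b := ((k:ℝ)+1)/(m:ℝ)) ?_ (hcont2 k)
    · rw [Real.norm_eq_abs, abs_of_nonneg hnn] at h
      exact h
    · refine (ae_restrict_mem measurableSet_uIoc).mono fun t ht => ?_
      rw [Set.uIoc_of_le (hle k)] at ht
      rw [Real.norm_eq_abs]
      exact hpt t (le_trans (by positivity) ht.1.le)
  -- summability of the comparison series and its sum
  have heqG : ∀ k : ℕ, p k * (ε * (1/(m:ℝ)) + C * (((((k:ℝ)+1)/(m:ℝ) - x)^3 - ((k:ℝ)/(m:ℝ) - x)^3)/3))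
      = (Real.exp (-l) * (C * (1/(m:ℝ))^3)) * ((k:ℝ)^2 * (l^k / (Nat.factorial k : ℝ)))
        + (Real.exp (-l) * (C * ((1/(m:ℝ))^3 - 2*(1/(m:ℝ))^2*x))) * ((k:ℝ) * (l^k / (Nat.factorial k : ℝ)))
        + (Real.exp (-l) * (ε*(1/(m:ℝ)) + C*((1/(m:ℝ))*x^2 - (1/(m:ℝ))^2*x + (1/(m:ℝ))^3/3)))
            * (l^k / (Nat.factorial k : ℝ)) := by
    intro k
    rw [hp_def]
    ring
  have hGsum : Summable (fun k : ℕ => p k * (ε * (1/(m:ℝ))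
      + C * (((((k:ℝ)+1)/(m:ℝ) - x)^3 - ((k:ℝ)/(m:ℝ) - x)^3)/3))) := by
    refine Summable.congr ?_ (fun k => (heqG k).symm)
    exact (((summable2 l).mul_left _).add ((summable1 l).mul_left _)).add ((summable0 l).mul_left _)
  have hGval : (m:ℝ) * ∑' k : ℕ, (p k * (ε * (1/(m:ℝ))
        + C * (((((k:ℝ)+1)/(m:ℝ) - x)^3 - ((k:ℝ)/(m:ℝ) - x)^3)/3)))
      = ε + C * (x^2*(c*(1/(m:ℝ)) - 1)^2 + 2*x*(c*(1/(m:ℝ)))*(1/(m:ℝ)) - x*(1/(m:ℝ)) + (1/(m:ℝ))^2/3) := by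
    rw [tsum_congr heqG,
      Summable.tsum_add (((summable2 l).mul_left _).add ((summable1 l).mul_left _)) ((summable0 l).mul_left _),
      Summable.tsum_add ((summable2 l).mul_left _) ((summable1 l).mul_left _),
      tsum_mul_left, tsum_mul_left, tsum_mul_left, tsum2, tsum1, tsum_exp_series]
    rw [hl_def, Real.exp_neg]
    have hene : Real.exp (x * c) ≠ 0 := Real.exp_ne_zero _
    field_simp
    ring
  -- put everything together
  have hsum_bound : |∑' k : ℕ, p k * ∫ t in ((k:ℝ)/(m:ℝ))..(((k:ℝ)+1)/(m:ℝ)), (g t - g x)|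
      ≤ ∑' k : ℕ, (p k * (ε * (1/(m:ℝ))
        + C * (((((k:ℝ)+1)/(m:ℝ) - x)^3 - ((k:ℝ)/(m:ℝ) - x)^3)/3))) := by
    have hFG : ∀ k : ℕ, |p k * ∫ t in ((k:ℝ)/(m:ℝ))..(((k:ℝ)+1)/(m:ℝ)), (g t - g x)|
        ≤ p k * (ε * (1/(m:ℝ)) + C * (((((k:ℝ)+1)/(m:ℝ) - x)^3 - ((k:ℝ)/(m:ℝ) - x)^3)/3)) := by
      intro k
      rw [abs_mul, abs_of_nonneg (hp0 k), ← hQint k]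
      exact mul_le_mul_of_nonneg_left (hintbd k) (hp0 k)
    have hFabs : Summable (fun k : ℕ =>
        |p k * ∫ t in ((k:ℝ)/(m:ℝ))..(((k:ℝ)+1)/(m:ℝ)), (g t - g x)|) :=
      Summable.of_nonneg_of_le (fun k => abs_nonneg _) hFG hGsum
    have hFabs' : Summable (fun k : ℕ =>
        ‖p k * ∫ t in ((k:ℝ)/(m:ℝ))..(((k:ℝ)+1)/(m:ℝ)), (g t - g x)‖) := by
      simpa only [Real.norm_eq_abs] using hFabs
    have h1 := norm_tsum_le_tsum_norm hFabs'
    rw [Real.norm_eq_abs] at h1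
    refine h1.trans ?_
    refine Summable.tsum_le_tsum (fun k => ?_) hFabs' hGsum
    rw [Real.norm_eq_abs]
    exact hFG k
  have hmain : |szaszKant a m g x - g x|
      ≤ ε + C * (x^2*(c*(1/(m:ℝ)) - 1)^2 + 2*x*(c*(1/(m:ℝ)))*(1/(m:ℝ)) - x*(1/(m:ℝ)) + (1/(m:ℝ))^2/3) := by
    rw [hA, abs_mul, abs_of_nonneg hm0.le, ← hGval]
    exact mul_le_mul_of_nonneg_left hsum_bound hm0.le
  refine le_trans hmain ?_
  have hsz : szRat a m = c * (1/(m:ℝ)) := by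
    rw [szRat, ← hc_def, div_eq_mul_inv, one_div]
  rw [hsz]
  have hinner : x^2*(c*(1/(m:ℝ)) - 1)^2 + 2*x*(c*(1/(m:ℝ)))*(1/(m:ℝ)) - x*(1/(m:ℝ)) + (1/(m:ℝ))^2/3
      ≤ b^2*(c*(1/(m:ℝ)) - 1)^2 + 2*b*(c*(1/(m:ℝ)))/(m:ℝ) + 1/(3*(m:ℝ)^2) := by
    have k3 : x^2*(c*(1/(m:ℝ)) - 1)^2 ≤ b^2*(c*(1/(m:ℝ)) - 1)^2 :=
      mul_le_mul_of_nonneg_right (by nlinarith) (sq_nonneg _)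
    have hch : 0 ≤ c * (1/(m:ℝ)) * (1/(m:ℝ)) := by positivity
    have k4' : 2*x*(c*(1/(m:ℝ)))*(1/(m:ℝ)) ≤ 2*b*(c*(1/(m:ℝ)))*(1/(m:ℝ)) := by
      nlinarith
    have k4 : 2*x*(c*(1/(m:ℝ)))*(1/(m:ℝ)) ≤ 2*b*(c*(1/(m:ℝ)))/(m:ℝ) := by
      have hrr : 2*b*(c*(1/(m:ℝ)))/(m:ℝ) = 2*b*(c*(1/(m:ℝ)))*(1/(m:ℝ)) := by ring
      rw [hrr]; exact k4'
    have k5 : 0 ≤ x*(1/(m:ℝ)) := by positivity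
    have k6 : (1/(m:ℝ))^2/3 = 1/(3*(m:ℝ)^2) := by
      field_simp
    linarith
  exact (add_le_add_iff_left ε).2 (mul_le_mul_of_nonneg_left hinner hC)

theorem szaszKant_tendsto_uniform (a : ℝ) (ha : 1 < a) (g : ℝ → ℝ)
    (hgc : ContinuousOn g (Set.Ici 0)) (B : ℝ) (hgb : ∀ t : ℝ, 0 ≤ t → |g t| ≤ B)
    (b : ℝ) (hb : 0 < b) :
    Tendsto (fun m : ℕ => ⨆ x : Set.Icc (0 : ℝ) b, |szaszKant a m g x - g x|)
      atTop (nhds 0) := by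
  have hB0 : 0 ≤ B := le_trans (abs_nonneg _) (hgb 0 le_rfl)
  haveI : Nonempty (Set.Icc (0:ℝ) b) := ⟨⟨0, le_rfl, hb.le⟩⟩
  rw [Metric.tendsto_atTop]
  intro ε hε
  -- uniform continuity on [0, b+1]
  have hcomp : IsCompact (Set.Icc (0:ℝ) (b+1)) := isCompact_Icc
  have hsubI : Set.Icc (0:ℝ) (b+1) ⊆ Set.Ici 0 := fun t ht => ht.1
  have huc' := hcomp.uniformContinuousOn_of_continuous (hgc.mono hsubI)
  rw [Metric.uniformContinuousOn_iff] at huc'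
  obtain ⟨δ₀, hδ₀, hδprop⟩ := huc' (ε/4) (by positivity)
  set δ : ℝ := min (δ₀/2) 1 with hδdef
  have hδpos : 0 < δ := lt_min (by positivity) one_pos
  have hδ1 : δ ≤ 1 := min_le_right _ _
  have huc2 : ∀ s ∈ Set.Icc (0:ℝ) (b+1), ∀ t ∈ Set.Icc (0:ℝ) (b+1),
      |s - t| ≤ δ → |g s - g t| ≤ ε/4 := by
    intro s hs t ht hst
    have hlt : dist s t < δ₀ := by
      rw [Real.dist_eq]
      calc |s - t| ≤ δ := hst
        _ ≤ δ₀/2 := min_le_left _ _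
        _ < δ₀ := by linarith
    have := hδprop s hs t ht hlt
    rw [Real.dist_eq] at this
    exact this.le
  set C : ℝ := 2*B/δ^2 with hC_def
  have hC0 : 0 ≤ C := by positivity
  have hCE : Tendsto (fun m : ℕ =>
      C * (b^2*(szRat a m - 1)^2 + 2*b*szRat a m/(m:ℝ) + 1/(3*(m:ℝ)^2))) atTop (nhds 0) := by
    have := (szE_tendsto a ha b).const_mul C
    simpa using this
  have hev : ∀ᶠ m : ℕ in atTop,
      C * (b^2*(szRat a m - 1)^2 + 2*b*szRat a m/(m:ℝ) + 1/(3*(m:ℝ)^2)) < ε/2 :=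
    hCE.eventually_lt_const (by linarith)
  obtain ⟨N, hN⟩ := eventually_atTop.1 (hev.and (eventually_ge_atTop 1))
  refine ⟨N, fun n hn => ?_⟩
  obtain ⟨h1, h2⟩ := hN n hn
  have hkey : ∀ x : Set.Icc (0:ℝ) b, |szaszKant a n g x - g x|
      ≤ ε/4 + C * (b^2*(szRat a n - 1)^2 + 2*b*szRat a n/(n:ℝ) + 1/(3*(n:ℝ)^2)) := fun x =>
    szaszKant_key a ha g hgc B hB0 hgb b hb (ε/4) δ (by positivity) hδpos hδ1 huc2 n h2 x.1 x.2
  have hsup_le : (⨆ x : Set.Icc (0:ℝ) b, |szaszKant a n g x - g x|)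
      ≤ ε/4 + C * (b^2*(szRat a n - 1)^2 + 2*b*szRat a n/(n:ℝ) + 1/(3*(n:ℝ)^2)) := ciSup_le hkey
  have hsup0 : 0 ≤ ⨆ x : Set.Icc (0:ℝ) b, |szaszKant a n g x - g x| :=
    Real.iSup_nonneg fun x => abs_nonneg _
  rw [Real.dist_eq, sub_zero, abs_of_nonneg hsup0]
  calc (⨆ x : Set.Icc (0:ℝ) b, |szaszKant a n g x - g x|)
      ≤ ε/4 + C * (b^2*(szRat a n - 1)^2 + 2*b*szRat a n/(n:ℝ) + 1/(3*(n:ℝ)^2)) := hsup_le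
    _ < ε/4 + ε/2 := by linarith
    _ < ε := by linarith
end
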